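/- Let f : 𝔻∖{0} → ℂ be holomorphic. Suppose there exist a sequence (z_k) in ℂ with z_k → 0, a sequence (ρ_k) in (0,∞) with ρ_k → 0, and a non-constant holomorphic map g : ℂ∖{0} → ℂ such that f(z_k + ρ_k v) → g(v) locally uniformly on ℂ∖{0} (that is, for every compact K ⊆ ℂ∖{0} one has z_k + ρ_k K ⊆ 𝔻∖{0} for all sufficiently large k, and sup_{v ∈ K} |f(z_k + ρ_k v) − g(v)| → 0 as k → ∞). Then f has an essential singularity at 0, i.e., f admits no holomorphic extension to 𝔻 and |f(z)| does not tend to ∞ as z → 0. -/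

import Mathlib

open Filter Metric Set Topology
open scoped Manifold ENNReal

noncomputable section

/-- The inverse hyperbolic tangent. -/
def arctanh (x : ℝ) : ℝ := Real.log ((1 + x) / (1 - x)) / 2

/-- The Poincaré distance on the unit disc. -/
def poincareDist (a b : ℂ) : ℝ :=
  arctanh (norm ((a - b) / (1 - (starRingEnd ℂ) a * b)))

/-- The Kobayashi pseudodistance between two points of a complex manifold `M`
(modeled on the complex normed space `E`), computed with chains of holomorphic discs
whose images lie in the subset `U`.  The value is `∞` if no chain exists. -/
def kobayashiDistOn (E : Type*) [NormedAddCommGroup E] [NormedSpace ℂ E]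
    {M : Type*} [TopologicalSpace M] [ChartedSpace E M] (U : Set M) (p q : M) : ℝ≥0∞ :=
  ⨅ (m : ℕ) (f : Fin (m + 1) → ℂ → M) (ab : Fin (m + 1) → ℂ × ℂ)
    (_ : ∀ j, MDifferentiableOn 𝓘(ℂ, ℂ) 𝓘(ℂ, E) (f j) (ball (0 : ℂ) 1))
    (_ : ∀ j, f j '' ball (0 : ℂ) 1 ⊆ U)
    (_ : ∀ j, (ab j).1 ∈ ball (0 : ℂ) 1 ∧ (ab j).2 ∈ ball (0 : ℂ) 1)
    (_ : f 0 (ab 0).1 = p) (_ : f (Fin.last m) (ab (Fin.last m)).2 = q)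
    (_ : ∀ j : Fin m, f j.castSucc (ab j.castSucc).2 = f j.succ (ab j.succ).1),
    ENNReal.ofReal (∑ j, poincareDist (ab j).1 (ab j).2)

/-- A metric on a compact complex manifold `V` is admissible if (the metric induces the
topology of `V`, which is automatic here, and) there is a family of Kobayashi hyperbolic
open neighbourhoods `U x` of the points `x` of `V` on which the metric is dominated by
the Kobayashi pseudodistance of `U x`. -/
def IsAdmissible (E : Type*) [NormedAddCommGroup E] [NormedSpace ℂ E]
    (V : Type*) [MetricSpace V] [ChartedSpace E V] : Prop :=
  ∃ U : V → Set V, ∀ x : V, x ∈ U x ∧ IsOpen (U x) ∧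
    (∀ p q : V, p ∈ U x → q ∈ U x → p ≠ q → 0 < kobayashiDistOn E (U x) p q) ∧
    (∀ p q : V, p ∈ U x → q ∈ U x →
      ENNReal.ofReal (dist p q) ≤ kobayashiDistOn E (U x) p q)

/-- The Poincaré distance of the disc `𝔻(a,r)`. -/
def discDist (a : ℂ) (r : ℝ) (z w : ℂ) : ℝ :=
  arctanh (r * norm (z - w) /
    norm ((r : ℂ) ^ 2 - (starRingEnd ℂ) (z - a) * (w - a)))

/-- The Lipschitz constant `L_{f, 𝔻(a,r)}` of a map `f` on the disc `𝔻(a,r)`, with respect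
to the Poincaré distance of `𝔻(a,r)` on the source and the metric of `V` on the target. -/
def LipConst {V : Type*} [MetricSpace V] (f : ℂ → V) (a : ℂ) (r : ℝ) : ℝ≥0∞ :=
  ⨆ (w : ℂ) (_ : w ∈ ball a r) (w' : ℂ) (_ : w' ∈ ball a r) (_ : w ≠ w'),
    ENNReal.ofReal (dist (f w) (f w') / discDist a r w w')

/-- A family `F` of maps is normal on `D` if every sequence in `F` has a subsequence
converging uniformly on every compact subset of `D`. -/
def NormalOn {V : Type*} [MetricSpace V] (F : Set (ℂ → V)) (D : Set ℂ) : Prop :=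
  ∀ f : ℕ → ℂ → V, (∀ n, f n ∈ F) →
    ∃ φ : ℕ → ℕ, StrictMono φ ∧ ∃ g : ℂ → V,
      ∀ K : Set ℂ, K ⊆ D → IsCompact K →
        TendstoUniformlyOn (fun n => f (φ n)) g atTop K

theorem statement_11 (f : ℂ → ℂ)
    (hf : DifferentiableOn ℂ f (ball (0 : ℂ) 1 \ {0}))
    (z : ℕ → ℂ) (ρ : ℕ → ℝ) (g : ℂ → ℂ)
    (hz : Tendsto z atTop (𝓝 0)) (hρpos : ∀ k, 0 < ρ k) (hρ : Tendsto ρ atTop (𝓝 0))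
    (hg : DifferentiableOn ℂ g {(0 : ℂ)}ᶜ)
    (hgnc : ∃ x ∈ ({(0 : ℂ)}ᶜ : Set ℂ), ∃ y ∈ ({(0 : ℂ)}ᶜ : Set ℂ), g x ≠ g y)
    (hconv : ∀ K : Set ℂ, K ⊆ ({(0 : ℂ)}ᶜ : Set ℂ) → IsCompact K →
      (∀ᶠ k in atTop, ∀ v ∈ K, z k + (ρ k : ℂ) * v ∈ ball (0 : ℂ) 1 \ {0}) ∧
      TendstoUniformlyOn (fun k v => f (z k + (ρ k : ℂ) * v)) g atTop K) :
    (¬ ∃ h : ℂ → ℂ, DifferentiableOn ℂ h (ball (0 : ℂ) 1) ∧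
      Set.EqOn h f (ball (0 : ℂ) 1 \ {0})) ∧
    ¬ Tendsto (fun ζ => norm (f ζ)) (𝓝[ball (0 : ℂ) 1 \ {0}] 0) atTop := by
  have key : ∀ v : ℂ, v ≠ 0 →
      Tendsto (fun k => f (z k + (ρ k : ℂ) * v)) atTop (𝓝 (g v)) ∧
      (∀ᶠ k in atTop, z k + (ρ k : ℂ) * v ∈ ball (0 : ℂ) 1 \ {0}) := by
    intro v hv
    obtain ⟨hmem, hunif⟩ := hconv {v} (by simp [singleton_subset_iff, Ne.symm hv]) isCompact_singleton
    exact ⟨hunif.tendsto_at (mem_singleton v), hmem.mono fun k hk => hk v rfl⟩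
  have hw : ∀ v : ℂ, Tendsto (fun k => z k + (ρ k : ℂ) * v) atTop (𝓝 0) := by
    intro v
    have hρ' : Tendsto (fun k => (ρ k : ℂ)) atTop (𝓝 0) := by
      have := (Complex.continuous_ofReal.tendsto 0).comp hρ
      simpa [Function.comp_def] using this
    have := hz.add (hρ'.mul_const v)
    simpa using this
  constructor
  · rintro ⟨h, hh, heq⟩
    have hc : ContinuousAt h 0 :=
      (hh.differentiableAt (isOpen_ball.mem_nhds (by simp))).continuousAt
    have hval : ∀ v : ℂ, v ≠ 0 → g v = h 0 := by
      intro v hv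
      obtain ⟨htend, hmem⟩ := key v hv
      have h1 : Tendsto (fun k => h (z k + (ρ k : ℂ) * v)) atTop (𝓝 (h 0)) :=
        hc.tendsto.comp (hw v)
      have h2 : Tendsto (fun k => h (z k + (ρ k : ℂ) * v)) atTop (𝓝 (g v)) :=
        htend.congr' (hmem.mono fun k hk => (heq hk).symm)
      exact tendsto_nhds_unique h2 h1
    obtain ⟨x, hx, y, hy, hxy⟩ := hgnc
    exact hxy ((hval x (by simpa using hx)).trans (hval y (by simpa using hy)).symm)
  · intro habs
    obtain ⟨htend, hmem⟩ := key 1 one_ne_zero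
    have hws : Tendsto (fun k => z k + (ρ k : ℂ) * 1) atTop
        (𝓝[ball (0 : ℂ) 1 \ {0}] 0) :=
      tendsto_nhdsWithin_iff.mpr ⟨hw 1, hmem⟩
    have h1 : Tendsto (fun k => norm (f (z k + (ρ k : ℂ) * 1))) atTop atTop :=
      habs.comp hws
    have h2 : Tendsto (fun k => norm (f (z k + (ρ k : ℂ) * 1))) atTop
        (𝓝 (norm (g 1))) :=
      (continuous_norm.tendsto _).comp htend
    exact not_tendsto_atTop_of_tendsto_nhds h2 h1

end
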